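/- arXiv:2207.00701 — 2 statements merged into one kernel-verified Lean document; each statement's English description precedes it below -/
import Mathlib

section
/- Let A be a finite set of vertices of a countable graph, let A_∞ = {v ∈ A : v ↔ ∞} in Bernoulli-p percolation, and assume: (i) P_p(u ↔ ∞, v ↔ ∞, u ↮ v) ≤ P_p(u ↔ ∞)·P_p(v ↔ ∞) for all u,v (BK inequality), and (ii) the matrix T_{p,∞}(u,v) = P_p(u ↔ v, u ↔ ∞) satisfies ‖T_{p,∞}‖_{2→2} ≤ θ*(p)·‖T_p‖²_{2→2}. Then Var_p(|A_∞|) ≤ θ*(p)·‖T_p‖²_{2→2}·|A|. -/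
open MeasureTheory

/-- `T` defines an operator on `ℓ²(V)` of norm at most `K`: all bilinear pairings
against nonnegative unit vectors are at most `K`. For matrices with nonnegative
entries this characterizes `‖T‖_{2→2} ≤ K`. -/
def IsL2BoundedBy {V : Type*} (T : V → V → ℝ) (K : ℝ) : Prop :=
  ∀ f g : V → ℝ, (∀ v, 0 ≤ f v) → (∀ v, 0 ≤ g v) →
    (∑' u : V, (f u) ^ 2) ≤ 1 → (∑' v : V, (g v) ^ 2) ≤ 1 →
    ∑' u : V, ∑' v : V, f u * T u v * g v ≤ K

/-- Variance bound for the number of vertices of a finite set `A` joined to infinity: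
under the BK inequality for pairs in distinct clusters and the operator norm bound
`‖T_{p,∞}‖_{2→2} ≤ θ* ‖T_p‖²_{2→2}`, one has `Var |A_∞| ≤ θ* ‖T_p‖²_{2→2} |A|`. -/
theorem variance_of_points_to_infinity
    {V : Type*} [Countable V] {Ω : Type*} [MeasurableSpace Ω]
    (μ : Measure Ω) [IsProbabilityMeasure μ]
    (Inf : V → Set Ω) (Conn : V → V → Set Ω)
    (A : Finset V) (θstar Tnorm : ℝ)
    (hInfMeas : ∀ v, MeasurableSet (Inf v))
    (hConnMeas : ∀ u v, MeasurableSet (Conn u v))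
    (hθstar : ∀ v, (μ (Inf v)).toReal ≤ θstar)
    (hθnn : 0 ≤ θstar) (hTnorm : 0 ≤ Tnorm)
    (hBK : ∀ u v, (μ (Inf u ∩ Inf v ∩ (Conn u v)ᶜ)).toReal ≤
      (μ (Inf u)).toReal * (μ (Inf v)).toReal)
    (hOpBound : IsL2BoundedBy (fun u v => (μ (Conn u v ∩ Inf u)).toReal)
      (θstar * Tnorm ^ 2)) :
    (∫ ω, (∑ v ∈ A, Set.indicator (Inf v) (1 : Ω → ℝ) ω) ^ 2 ∂μ) -
      (∫ ω, ∑ v ∈ A, Set.indicator (Inf v) (1 : Ω → ℝ) ω ∂μ) ^ 2 ≤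
      θstar * Tnorm ^ 2 * A.card := by
  classical
  set K := θstar * Tnorm ^ 2 with hK
  have hKnn : 0 ≤ K := by positivity
  -- first moment
  have hmean : (∫ ω, ∑ v ∈ A, Set.indicator (Inf v) (1 : Ω → ℝ) ω ∂μ)
      = ∑ v ∈ A, (μ (Inf v)).toReal := by
    rw [integral_finset_sum _ (fun v _ => (show Integrable ((Inf v).indicator (1 : Ω → ℝ)) μ from
      (integrable_const (1:ℝ)).indicator (hInfMeas v)))]
    refine Finset.sum_congr rfl fun v _ => ?_
    rw [MeasureTheory.integral_indicator (hInfMeas v)]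
    simp; rfl
  -- second moment
  have hsq : (∫ ω, (∑ v ∈ A, Set.indicator (Inf v) (1 : Ω → ℝ) ω) ^ 2 ∂μ)
      = ∑ u ∈ A, ∑ v ∈ A, (μ (Inf u ∩ Inf v)).toReal := by
    have hpt : ∀ ω, (∑ v ∈ A, Set.indicator (Inf v) (1 : Ω → ℝ) ω) ^ 2
        = ∑ u ∈ A, ∑ v ∈ A, Set.indicator (Inf u ∩ Inf v) (1 : Ω → ℝ) ω := by
      intro ω
      rw [sq, Finset.sum_mul_sum]
      refine Finset.sum_congr rfl fun u _ => Finset.sum_congr rfl fun v _ => ?_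
      by_cases hu : ω ∈ Inf u <;> by_cases hv : ω ∈ Inf v <;>
        simp [Set.indicator_apply, hu, hv]
    simp_rw [hpt]
    rw [integral_finset_sum _ (fun u _ => integrable_finset_sum _
      (fun v _ => (show Integrable ((Inf u ∩ Inf v).indicator (1 : Ω → ℝ)) μ from
        (integrable_const (1:ℝ)).indicator ((hInfMeas u).inter (hInfMeas v)))))]
    refine Finset.sum_congr rfl fun u _ => ?_
    rw [integral_finset_sum _
      (fun v _ => (show Integrable ((Inf u ∩ Inf v).indicator (1 : Ω → ℝ)) μ from
        (integrable_const (1:ℝ)).indicator ((hInfMeas u).inter (hInfMeas v))))]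
    refine Finset.sum_congr rfl fun v _ => ?_
    rw [MeasureTheory.integral_indicator ((hInfMeas u).inter (hInfMeas v))]
    simp; rfl
  -- splitting each pair term
  have hsplit : ∀ u v, (μ (Inf u ∩ Inf v)).toReal
      ≤ (μ (Inf u)).toReal * (μ (Inf v)).toReal + (μ (Conn u v ∩ Inf u)).toReal := by
    intro u v
    have h1 : μ (Inf u ∩ Inf v) ≤ μ (Inf u ∩ Inf v ∩ (Conn u v)ᶜ) + μ (Inf u ∩ Inf v ∩ Conn u v) := by
      have : Inf u ∩ Inf v ⊆ (Inf u ∩ Inf v ∩ (Conn u v)ᶜ) ∪ (Inf u ∩ Inf v ∩ Conn u v) := by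
        intro ω hω
        by_cases hc : ω ∈ Conn u v
        · exact Or.inr ⟨hω, hc⟩
        · exact Or.inl ⟨hω, hc⟩
      exact le_trans (measure_mono this) (measure_union_le _ _)
    have h2 : (μ (Inf u ∩ Inf v)).toReal
        ≤ (μ (Inf u ∩ Inf v ∩ (Conn u v)ᶜ)).toReal + (μ (Inf u ∩ Inf v ∩ Conn u v)).toReal := by
      rw [← ENNReal.toReal_add (measure_ne_top μ _) (measure_ne_top μ _)]
      exact ENNReal.toReal_mono (by
        exact ENNReal.add_ne_top.mpr ⟨measure_ne_top μ _, measure_ne_top μ _⟩) h1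
    have h3 : (μ (Inf u ∩ Inf v ∩ Conn u v)).toReal ≤ (μ (Conn u v ∩ Inf u)).toReal :=
      ENNReal.toReal_mono (measure_ne_top μ _)
        (measure_mono (fun ω hω => ⟨hω.2, hω.1.1⟩))
    calc (μ (Inf u ∩ Inf v)).toReal
        ≤ (μ (Inf u ∩ Inf v ∩ (Conn u v)ᶜ)).toReal + (μ (Inf u ∩ Inf v ∩ Conn u v)).toReal := h2
      _ ≤ (μ (Inf u)).toReal * (μ (Inf v)).toReal + (μ (Conn u v ∩ Inf u)).toReal :=
          add_le_add (hBK u v) h3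
  -- bound on the connected part via the operator norm
  have hop : ∑ u ∈ A, ∑ v ∈ A, (μ (Conn u v ∩ Inf u)).toReal ≤ K * A.card := by
    rcases A.eq_empty_or_nonempty with rfl | hA
    · simp
    · have hn : (0:ℝ) < A.card := by exact_mod_cast Finset.card_pos.mpr hA
      set f : V → ℝ := fun v => if v ∈ A then Real.sqrt (A.card : ℝ)⁻¹ else 0 with hf
      have hf0 : ∀ v, 0 ≤ f v := by
        intro v; simp only [hf]; split <;> positivity
      have hfsq : ∑' v, (f v) ^ 2 = 1 := by
        rw [tsum_eq_sum (s := A) (by intro v hv; simp [hf, if_neg hv])]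
        have : ∀ v ∈ A, (f v) ^ 2 = (A.card : ℝ)⁻¹ := by
          intro v hv
          simp only [hf, if_pos hv]
          rw [sq, Real.mul_self_sqrt (by positivity)]
        rw [Finset.sum_congr rfl this, Finset.sum_const, nsmul_eq_mul]
        field_simp
      have key := hOpBound f f hf0 hf0 hfsq.le hfsq.le
      have hinner : ∀ u, (∑' v, f u * (μ (Conn u v ∩ Inf u)).toReal * f v)
          = ∑ v ∈ A, f u * (μ (Conn u v ∩ Inf u)).toReal * f v := by
        intro u
        exact tsum_eq_sum (by intro v hv; simp [hf, if_neg hv])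
      have houter : (∑' u, ∑ v ∈ A, f u * (μ (Conn u v ∩ Inf u)).toReal * f v)
          = ∑ u ∈ A, ∑ v ∈ A, f u * (μ (Conn u v ∩ Inf u)).toReal * f v := by
        exact tsum_eq_sum (by intro u hu; simp [hf, if_neg hu])
      simp only [hinner, houter] at key
      have heq : ∑ u ∈ A, ∑ v ∈ A, f u * (μ (Conn u v ∩ Inf u)).toReal * f v
          = (A.card : ℝ)⁻¹ * ∑ u ∈ A, ∑ v ∈ A, (μ (Conn u v ∩ Inf u)).toReal := by
        rw [Finset.mul_sum]
        refine Finset.sum_congr rfl fun u hu => ?_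
        rw [Finset.mul_sum]
        refine Finset.sum_congr rfl fun v hv => ?_
        simp only [hf, if_pos hu, if_pos hv]
        rw [show Real.sqrt (A.card:ℝ)⁻¹ * (μ (Conn u v ∩ Inf u)).toReal * Real.sqrt (A.card:ℝ)⁻¹
            = (Real.sqrt (A.card:ℝ)⁻¹ * Real.sqrt (A.card:ℝ)⁻¹) * (μ (Conn u v ∩ Inf u)).toReal
            by ring, Real.mul_self_sqrt (by positivity)]
      rw [heq] at key
      calc ∑ u ∈ A, ∑ v ∈ A, (μ (Conn u v ∩ Inf u)).toReal
          = (A.card : ℝ) * ((A.card : ℝ)⁻¹ * ∑ u ∈ A, ∑ v ∈ A, (μ (Conn u v ∩ Inf u)).toReal) := by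
            field_simp
        _ ≤ (A.card : ℝ) * K := by
            exact mul_le_mul_of_nonneg_left key (le_of_lt hn)
        _ = K * A.card := by ring
  -- put everything together
  rw [hmean, hsq]
  have hBKsum : ∑ u ∈ A, ∑ v ∈ A, (μ (Inf u)).toReal * (μ (Inf v)).toReal
      = (∑ v ∈ A, (μ (Inf v)).toReal) ^ 2 := by
    rw [sq, Finset.sum_mul_sum]
  have := Finset.sum_le_sum (s := A) (fun u _ =>
    Finset.sum_le_sum (s := A) (fun v _ => hsplit u v))
  calc (∑ u ∈ A, ∑ v ∈ A, (μ (Inf u ∩ Inf v)).toReal) - (∑ v ∈ A, (μ (Inf v)).toReal) ^ 2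
      ≤ (∑ u ∈ A, ∑ v ∈ A, ((μ (Inf u)).toReal * (μ (Inf v)).toReal
          + (μ (Conn u v ∩ Inf u)).toReal)) - (∑ v ∈ A, (μ (Inf v)).toReal) ^ 2 := by
        linarith
    _ = ∑ u ∈ A, ∑ v ∈ A, (μ (Conn u v ∩ Inf u)).toReal := by
        simp only [Finset.sum_add_distrib, hBKsum]; ring
    _ ≤ K * A.card := hop
end

section
/- Let (B_r)_{r≥0} be a nonnegative nondecreasing sequence (with B_r → ∞), and suppose there are constants D > 0 and c, r₀ such that for every r ≥ 1 and k ≥ 1, B_{kr} ≤ (1 + D·S_r)^{k-1}·B_r, where S_r ≥ 0. If additionally γ := lim_{r→∞}(1/r)log B_r exists and is finite, then γ ≤ inf_{r≥1} (1/r)·log(1 + D·S_r); in particular S_r ≥ (e^{γr} − 1)/D ≥ c'·e^{γr} for a constant c' > 0 whenever γr ≥ 1. -/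
/-- Refined Fekete argument relating the growth rate of balls to sphere sizes:
iterating `B(kr) ≤ (1 + D S_r)^{k-1} B_r` shows that `γ ≤ (1/r) log (1 + D S_r)`,
so `S_r ≥ (e^{γ r} - 1)/D ≥ c' e^{γ r}` when `γ r ≥ 1`. -/
theorem refined_fekete_sphere_bound (B S : ℕ → ℝ) (D γ : ℝ)
    (hD : 0 < D)
    (hBnn : ∀ r, 0 ≤ B r) (hmono : Monotone B)
    (hBlim : Filter.Tendsto B Filter.atTop Filter.atTop)
    (hSnn : ∀ r, 0 ≤ S r)
    (hrec : ∀ r k : ℕ, 1 ≤ r → 1 ≤ k → B (k * r) ≤ (1 + D * S r) ^ (k - 1) * B r)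
    (hγ : Filter.Tendsto (fun r : ℕ => Real.log (B r) / r) Filter.atTop (nhds γ)) :
    (∀ r : ℕ, 1 ≤ r → γ ≤ Real.log (1 + D * S r) / r) ∧
    (∀ r : ℕ, 1 ≤ r → (Real.exp (γ * r) - 1) / D ≤ S r) ∧
    ∃ c' : ℝ, 0 < c' ∧ ∀ r : ℕ, 1 ≤ r → 1 ≤ γ * r →
      c' * Real.exp (γ * r) ≤ S r := by
  -- B r > 0 for all r ≥ 1
  have hBpos : ∀ r : ℕ, 1 ≤ r → 0 < B r := by
    intro r hr
    rcases lt_or_eq_of_le (hBnn r) with h | h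
    · exact h
    · exfalso
      -- B r = 0 forces B (k*r) = 0 for all k ≥ 1, contradicting B → ∞
      obtain ⟨N, hN⟩ := (Filter.tendsto_atTop.mp hBlim 1).exists_forall_of_atTop
      have hNk : B ((N + 1) * r) ≤ 0 := by
        have := hrec r (N + 1) hr (Nat.le_add_left 1 N)
        rw [← h] at this
        simpa using this
      have h1 : (1 : ℝ) ≤ B ((N + 1) * r) := by
        apply le_trans (hN ((N+1)*r) ?_) le_rfl
        calc N ≤ N + 1 := Nat.le_succ N
          _ ≤ (N + 1) * r := Nat.le_mul_of_pos_right _ hr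
      linarith
  have hbase : ∀ r : ℕ, 1 ≤ r → γ ≤ Real.log (1 + D * S r) / r := by
    intro r hr
    have hrpos : (0 : ℝ) < r := by exact_mod_cast hr
    have hone : (1 : ℝ) ≤ 1 + D * S r := by nlinarith [hSnn r, hD.le]
    set L := Real.log (1 + D * S r) / r with hL
    -- f k := log B (k*r) / (k*r) tends to γ
    have hcomp : Filter.Tendsto (fun k : ℕ => k * r) Filter.atTop Filter.atTop :=
      Filter.tendsto_atTop_mono (fun k => Nat.le_mul_of_pos_right k hr) Filter.tendsto_id
    have hf : Filter.Tendsto (fun k : ℕ => Real.log (B (k * r)) / (k * r : ℕ))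
        Filter.atTop (nhds γ) := hγ.comp hcomp
    -- g k := ((k-1)/k) L + (log B r / r) * (1/k) tends to L
    have hg : Filter.Tendsto
        (fun k : ℕ => ((k : ℝ) - 1) / k * L + Real.log (B r) / r * (1 / k))
        Filter.atTop (nhds L) := by
      have h1 : Filter.Tendsto (fun k : ℕ => ((k : ℝ) - 1) / k) Filter.atTop (nhds 1) := by
        have base : Filter.Tendsto (fun k : ℕ => 1 - 1 / (k:ℝ)) Filter.atTop (nhds 1) := by
          simpa using ((tendsto_const_nhds : Filter.Tendsto (fun _ : ℕ => (1:ℝ)) Filter.atTop (nhds 1)).sub tendsto_one_div_atTop_nhds_zero_nat)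
        refine base.congr' ?_
        filter_upwards [Filter.eventually_ge_atTop 1] with k hk
        have : (k:ℝ) ≠ 0 := by positivity
        field_simp
      have h2 : Filter.Tendsto (fun k : ℕ => Real.log (B r) / r * (1 / k))
          Filter.atTop (nhds 0) := by
        simpa using tendsto_one_div_atTop_nhds_zero_nat.const_mul (Real.log (B r) / r)
      simpa using (h1.mul_const L).add h2
    refine le_of_tendsto_of_tendsto hf hg ?_
    filter_upwards [Filter.eventually_ge_atTop 1] with k hk
    have hkpos : (0 : ℝ) < k := by exact_mod_cast hk
    have hkrpos : (0 : ℝ) < ((k * r : ℕ) : ℝ) := by positivity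
    have hBkr : 0 < B (k * r) := hBpos _ (le_trans hr (Nat.le_mul_of_pos_left r hk))
    have hlog : Real.log (B (k * r)) ≤
        ((k : ℝ) - 1) * Real.log (1 + D * S r) + Real.log (B r) := by
      have h1 := Real.log_le_log hBkr (hrec r k hr hk)
      rw [Real.log_mul (by positivity) (hBpos r hr).ne', Real.log_pow] at h1
      have hc : ((k - 1 : ℕ) : ℝ) = (k : ℝ) - 1 := by
        rw [Nat.cast_sub hk]; simp
      rw [hc] at h1
      exact h1
    rw [div_le_iff₀ hkrpos]
    have hkr : ((k * r : ℕ) : ℝ) = (k : ℝ) * r := by push_cast; ring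
    rw [hkr]
    calc Real.log (B (k * r))
        ≤ ((k : ℝ) - 1) * Real.log (1 + D * S r) + Real.log (B r) := hlog
      _ = (((k : ℝ) - 1) / k * L + Real.log (B r) / r * (1 / k)) * ((k : ℝ) * r) := by
          rw [hL]; field_simp
  refine ⟨hbase, ?_, ?_⟩
  · intro r hr
    have h := hbase r hr
    have hrpos : (0 : ℝ) < r := by exact_mod_cast hr
    have h2 : γ * r ≤ Real.log (1 + D * S r) := by
      exact (le_div_iff₀ hrpos).mp h
    have h3 : Real.exp (γ * r) ≤ 1 + D * S r := by
      have hone : (0 : ℝ) < 1 + D * S r := by nlinarith [hSnn r, hD.le]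
      calc Real.exp (γ * r) ≤ Real.exp (Real.log (1 + D * S r)) := Real.exp_le_exp.mpr h2
        _ = 1 + D * S r := Real.exp_log hone
    rw [div_le_iff₀ hD]
    linarith [mul_comm D (S r)]
  · have hexp1 : Real.exp (-1) < 1 := Real.exp_lt_one_iff.mpr (by norm_num)
    refine ⟨(1 - Real.exp (-1)) / D, div_pos (by linarith) hD, ?_⟩
    intro r hr hγr
    have hrpos : (0 : ℝ) < r := by exact_mod_cast hr
    have h := hbase r hr
    have h3 : Real.exp (γ * r) ≤ 1 + D * S r := by
      have h2 : γ * r ≤ Real.log (1 + D * S r) := by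
        exact (le_div_iff₀ hrpos).mp h
      have hone : (0 : ℝ) < 1 + D * S r := by nlinarith [hSnn r, hD.le]
      calc Real.exp (γ * r) ≤ Real.exp (Real.log (1 + D * S r)) := Real.exp_le_exp.mpr h2
        _ = 1 + D * S r := Real.exp_log hone
    -- 1 ≤ exp(γ r - 1) = exp(γ r) * exp(-1)
    have h4 : (1 : ℝ) ≤ Real.exp (γ * r) * Real.exp (-1) := by
      rw [← Real.exp_add]
      have : (0 : ℝ) ≤ γ * r + -1 := by linarith
      calc (1 : ℝ) = Real.exp 0 := Real.exp_zero.symm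
        _ ≤ Real.exp (γ * r + -1) := Real.exp_le_exp.mpr this
    rw [div_mul_eq_mul_div, div_le_iff₀ hD]
    nlinarith [mul_comm D (S r)]
end
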